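/- For positive integers n₁,…,n_k with n₁ + ⋯ + n_k = n, the inequality ∏_{a=1}^k (n_a/n)^{n_a} / Γ(n_a + 1/2) ≤ 1 / (Γ(1/2)^{k-1} · Γ(n + 1/2)) holds. -/
import Mathlib

private lemma cube_nonneg (m : ℕ) : 0 ≤ (m:ℝ) * ((m:ℝ)-1) * ((m:ℝ)-2) := by
  rcases m with _ | _ | m
  · norm_num
  · norm_num
  · have h : (0:ℝ) ≤ (m:ℝ) := Nat.cast_nonneg m
    push_cast
    nlinarith [mul_nonneg (mul_nonneg h h) h, mul_nonneg h h]

private lemma trunc (x : ℝ) (hx0 : 0 ≤ x) (hx1 : x ≤ 1) (m : ℕ) :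
    1 - (m:ℝ)*x + (m:ℝ)*((m:ℝ)-1)/2*x^2 - (m:ℝ)*((m:ℝ)-1)*((m:ℝ)-2)/6*x^3
      ≤ (1-x)^m := by
  induction m with
  | zero => norm_num
  | succ m ih =>
    have h1 : (0:ℝ) ≤ 1 - x := by linarith
    have h2 := mul_le_mul_of_nonneg_right ih h1
    have h3 := cube_nonneg m
    have h4 : (0:ℝ) ≤ (m:ℝ) * ((m:ℝ)-1) * ((m:ℝ)-2) * x^4 :=
      mul_nonneg h3 (by positivity)
    have hps : (1-x)^(m+1) = (1-x)^m*(1-x) := pow_succ _ _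
    push_cast
    nlinarith [h2, h4, hps]

private lemma pow_self_pos (m : ℕ) : (0:ℝ) < (m:ℝ)^m := by
  rcases Nat.eq_zero_or_pos m with h | h
  · subst h; norm_num
  · have : (0:ℝ) < (m:ℝ) := by exact_mod_cast h
    positivity

private lemma Estep (m : ℕ) :
    ((m:ℝ)+1)^(2*m+2) * (2*(m:ℝ)+3) ≤ ((m:ℝ)+2)^(m+2) * (2*(m:ℝ)+1) * (m:ℝ)^m := by
  set M : ℝ := (m:ℝ) with hM
  have hMnn : (0:ℝ) ≤ M := Nat.cast_nonneg m
  have hP : (0:ℝ) < (M+1)^2 := by positivity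
  set x : ℝ := 1/(M+1)^2 with hxdef
  have hx0 : 0 ≤ x := by positivity
  have hx1 : x ≤ 1 := by
    rw [hxdef, div_le_one hP]; nlinarith
  have htr := trunc x hx0 hx1 m
  rw [← hM] at htr
  have key : (M+1)^2*(2*M+3) ≤ (2*M+1)*(M+2)^2 *
      (1 - M*x + M*(M-1)/2*x^2 - M*(M-1)*(M-2)/6*x^3) := by
    rw [← sub_nonneg]
    have hid : (2*M+1)*(M+2)^2 *
        (1 - M*x + M*(M-1)/2*x^2 - M*(M-1)*(M-2)/6*x^3) - (M+1)^2*(2*M+3)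
        = (M^6+6*M^5+20*M^4+29*M^3+18*M^2+16*M+6) / (6*((M+1)^2)^3) := by
      rw [hxdef]
      field_simp
      ring
    rw [hid]
    positivity
  have h3 : (M+1)^2*(2*M+3) ≤ (2*M+1)*(M+2)^2*(1-x)^m := by
    calc (M+1)^2*(2*M+3) ≤ (2*M+1)*(M+2)^2 *
        (1 - M*x + M*(M-1)/2*x^2 - M*(M-1)*(M-2)/6*x^3) := key
      _ ≤ (2*M+1)*(M+2)^2*(1-x)^m := by
          apply mul_le_mul_of_nonneg_left htr (by positivity)
  have h4 := mul_le_mul_of_nonneg_left h3 (pow_nonneg hP.le m)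
  have hL : (M+1)^(2*m+2) * (2*M+3) = ((M+1)^2)^m * ((M+1)^2*(2*M+3)) := by
    rw [← mul_assoc, ← pow_mul, ← pow_add]
  have h1x : (M+1)^2 * (1-x) = M*(M+2) := by
    rw [hxdef]; field_simp; ring
  have hR : ((M+1)^2)^m * ((2*M+1)*(M+2)^2*(1-x)^m)
      = (M+2)^(m+2) * (2*M+1) * M^m := by
    have : ((M+1)^2)^m * (1-x)^m = (M*(M+2))^m := by
      rw [← mul_pow, h1x]
    calc ((M+1)^2)^m * ((2*M+1)*(M+2)^2*(1-x)^m)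
        = (((M+1)^2)^m * (1-x)^m) * ((2*M+1)*(M+2)^2) := by ring
      _ = (M*(M+2))^m * ((2*M+1)*(M+2)^2) := by rw [this]
      _ = (M+2)^(m+2) * (2*M+1) * M^m := by
          rw [mul_pow, pow_add]; ring
  rw [hL, ← hR]
  exact h4

private noncomputable def Fn (m : ℕ) : ℝ :=
  (m:ℝ)^m * 4^m * (Nat.factorial m) / (Nat.factorial (2*m))

private lemma Fn_pos (m : ℕ) : 0 < Fn m := by
  unfold Fn
  have h1 := pow_self_pos m
  have h2 : (0:ℝ) < (Nat.factorial m : ℝ) := by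
    exact_mod_cast Nat.factorial_pos m
  have h3 : (0:ℝ) < (Nat.factorial (2*m) : ℝ) := by
    exact_mod_cast Nat.factorial_pos (2*m)
  positivity

private noncomputable def Dn (m : ℕ) : ℝ :=
  2*((m:ℝ)+1)^(m+1) / ((m:ℝ)^m * (2*(m:ℝ)+1))

private lemma Dn_pos (m : ℕ) : 0 < Dn m := by
  unfold Dn
  have h1 := pow_self_pos m
  have h2 : (0:ℝ) ≤ (m:ℝ) := Nat.cast_nonneg m
  positivity

private lemma Fn_succ (m : ℕ) : Fn (m+1) = Fn m * Dn m := by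
  unfold Fn Dn
  have h2 : 2*(m+1) = (2*m+1)+1 := by ring
  rw [h2, Nat.factorial_succ, Nat.factorial_succ, Nat.factorial_succ]
  have hf : (0:ℝ) < (Nat.factorial (2*m) : ℝ) := by
    exact_mod_cast Nat.factorial_pos (2*m)
  have hm := pow_self_pos m
  have hm1 : (0:ℝ) ≤ (m:ℝ) := Nat.cast_nonneg m
  push_cast
  rw [pow_succ, pow_succ]
  field_simp
  ring

private lemma Dn_step (m : ℕ) : Dn m ≤ Dn (m+1) := by
  unfold Dn
  have hm := pow_self_pos m
  have hm0 : (0:ℝ) ≤ (m:ℝ) := Nat.cast_nonneg m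
  have hd1 : (0:ℝ) < (m:ℝ)^m * (2*(m:ℝ)+1) := by positivity
  have hd1' : (0:ℝ) < (m:ℝ)^m * (2*(m:ℝ)+1) := hd1
  have hE := Estep m
  have hsq : ((m:ℝ)+1)^(m+1) * ((m:ℝ)+1)^(m+1) = ((m:ℝ)+1)^(2*m+2) := by
    rw [← pow_add]; ring_nf
  have hcast : ((m+1:ℕ):ℝ) = (m:ℝ)+1 := by push_cast; ring
  rw [hcast]
  rw [div_le_div_iff₀ hd1' (by positivity)]
  have hexp : ((m:ℝ)+1+1)^(m+1+1) = ((m:ℝ)+2)^(m+2) := by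
    rw [show m+1+1 = m+2 from by omega]; ring
  rw [hexp]
  nlinarith [hE, hsq]

private lemma Dn_mono : Monotone Dn := monotone_nat_of_le_succ Dn_step

private lemma Fn_zero : Fn 0 = 1 := by
  unfold Fn; norm_num

private lemma Fn_super (a b : ℕ) : Fn a * Fn b ≤ Fn (a+b) := by
  induction b with
  | zero => rw [Fn_zero]; simp
  | succ b ih =>
    have h1 : Fn a * Fn (b+1) = (Fn a * Fn b) * Dn b := by
      rw [Fn_succ]; ring
    have h2 : a + (b+1) = (a+b) + 1 := by ring
    rw [h1, h2, Fn_succ]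
    calc (Fn a * Fn b) * Dn b ≤ Fn (a+b) * Dn b :=
          mul_le_mul_of_nonneg_right ih (Dn_pos b).le
      _ ≤ Fn (a+b) * Dn (a+b) :=
          mul_le_mul_of_nonneg_left (Dn_mono (Nat.le_add_left b a)) (Fn_pos (a+b)).le

private lemma Fn_prod {k : ℕ} (f : Fin k → ℕ) : ∏ a, Fn (f a) ≤ Fn (∑ a, f a) := by
  induction k with
  | zero => simp [Fn_zero]
  | succ k ih =>
    rw [Fin.prod_univ_succ, Fin.sum_univ_succ]
    calc Fn (f 0) * ∏ i : Fin k, Fn (f i.succ)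
        ≤ Fn (f 0) * Fn (∑ i : Fin k, f i.succ) :=
          mul_le_mul_of_nonneg_left (ih _) (Fn_pos _).le
      _ ≤ Fn (f 0 + ∑ i : Fin k, f i.succ) := Fn_super _ _

private lemma Gamma_half (m : ℕ) :
    Real.Gamma ((m:ℝ) + 1/2) = Real.sqrt Real.pi * (Nat.factorial (2*m)) /
      (4^m * Nat.factorial m) := by
  induction m with
  | zero =>
    rw [show ((0:ℕ):ℝ) + 1/2 = 1/2 by norm_num, Real.Gamma_one_half_eq]
    norm_num [Nat.factorial]
  | succ m ih =>
    have h : ((m+1:ℕ):ℝ) + 1/2 = ((m:ℝ)+1/2) + 1 := by push_cast; ring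
    have hne : ((m:ℝ)+1/2) ≠ 0 := by positivity
    rw [h, Real.Gamma_add_one hne, ih]
    have h2 : 2*(m+1) = (2*m+1)+1 := by ring
    rw [h2, Nat.factorial_succ, Nat.factorial_succ, Nat.factorial_succ]
    have hf : (0:ℝ) < (Nat.factorial (2*m) : ℝ) := by
      exact_mod_cast Nat.factorial_pos (2*m)
    have hfm : (0:ℝ) < (Nat.factorial m : ℝ) := by
      exact_mod_cast Nat.factorial_pos m
    have h4 : (0:ℝ) < (4:ℝ)^m := by positivity
    push_cast
    rw [pow_succ]
    field_simp
    ring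

/-- For positive integers `n₁,…,n_k` summing to `n`,
`∏_a (n_a/n)^(n_a) / Γ(n_a + 1/2) ≤ 1 / (Γ(1/2)^(k-1) Γ(n + 1/2))`. -/
theorem multinomial_likelihood_ratio_le (k n : ℕ) (hk : 1 ≤ k) (hn : 1 ≤ n)
    (f : Fin k → ℕ) (hpos : ∀ a, 1 ≤ f a) (hsum : ∑ a, f a = n) :
    ∏ a, (((f a : ℝ) / n) ^ (f a) / Real.Gamma ((f a : ℝ) + 1/2)) ≤
      1 / (Real.Gamma (1/2) ^ (k - 1) * Real.Gamma ((n : ℝ) + 1/2)) := by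
  have hπ : 0 < Real.sqrt Real.pi := Real.sqrt_pos.mpr Real.pi_pos
  have hn0 : (0:ℝ) < (n:ℝ) := by exact_mod_cast hn
  have hterm : ∀ a : Fin k, ((f a : ℝ)/n)^(f a) / Real.Gamma ((f a : ℝ) + 1/2)
      = Fn (f a) * (1/Real.sqrt Real.pi) * ((1/(n:ℝ))^(f a)) := by
    intro a
    rw [Gamma_half]
    unfold Fn
    have h2 : (0:ℝ) < (Nat.factorial (f a) : ℝ) := by
      exact_mod_cast Nat.factorial_pos (f a)
    have h3 : (0:ℝ) < (Nat.factorial (2*(f a)) : ℝ) := by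
      exact_mod_cast Nat.factorial_pos (2*(f a))
    rw [div_pow, div_pow]
    field_simp
    ring
  have hL : ∏ a, (((f a : ℝ)/n)^(f a) / Real.Gamma ((f a : ℝ) + 1/2))
      = (∏ a, Fn (f a)) * (1/Real.sqrt Real.pi)^k * (1/(n:ℝ))^n := by
    rw [Finset.prod_congr rfl (fun a _ => hterm a), Finset.prod_mul_distrib,
      Finset.prod_mul_distrib, Finset.prod_const, Finset.card_univ, Fintype.card_fin,
      Finset.prod_pow_eq_pow_sum, hsum]
  have hR : 1 / (Real.Gamma (1/2) ^ (k - 1) * Real.Gamma ((n : ℝ) + 1/2))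
      = Fn n * (1/Real.sqrt Real.pi)^k * (1/(n:ℝ))^n := by
    rw [Real.Gamma_one_half_eq, Gamma_half]
    have hkk : Real.sqrt Real.pi ^ (k-1) * Real.sqrt Real.pi = Real.sqrt Real.pi ^ k := by
      rw [← pow_succ, Nat.sub_add_cancel hk]
    have h2 : (0:ℝ) < (Nat.factorial n : ℝ) := by exact_mod_cast Nat.factorial_pos n
    have h3 : (0:ℝ) < (Nat.factorial (2*n) : ℝ) := by
      exact_mod_cast Nat.factorial_pos (2*n)
    unfold Fn
    have hne1 : Real.sqrt Real.pi ≠ 0 := hπ.ne'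
    have hne2 : ((n:ℝ))^n ≠ 0 := (pow_self_pos n).ne'
    rw [one_div_pow, one_div_pow, ← hkk]
    field_simp
  rw [hL, hR]
  have hs : Fn (∑ a, f a) = Fn n := by rw [hsum]
  have h := Fn_prod f
  rw [hs] at h
  have hc : (0:ℝ) ≤ (1/Real.sqrt Real.pi)^k * (1/(n:ℝ))^n := by positivity
  calc (∏ a, Fn (f a)) * (1/Real.sqrt Real.pi)^k * (1/(n:ℝ))^n
      = (∏ a, Fn (f a)) * ((1/Real.sqrt Real.pi)^k * (1/(n:ℝ))^n) := by ring
    _ ≤ Fn n * ((1/Real.sqrt Real.pi)^k * (1/(n:ℝ))^n) :=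
        mul_le_mul_of_nonneg_right h hc
    _ = Fn n * (1/Real.sqrt Real.pi)^k * (1/(n:ℝ))^n := by ring
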